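/- Let p be a positive natural number, E := EuclideanSpace ℝ (Fin p), and let (Ω, 𝒜, μ) be a probability space with a filtration (ℱ_k)_{k∈ℕ}. Let L, σ, c, b, b₀, B₃ > 0, and set b̃ := b₀·c² + b·B₃/c. Let f : E → ℝ be differentiable with L-Lipschitz gradient and bounded below by f* ∈ ℝ. Let γ ∈ (1/2, 1], 0 < α ≤ 1/(4·L), and set α_k := α/(k+1)^γ. Suppose random sequences θ_k, r_k, b_k : Ω → E satisfy: θ_0 deterministic; θ_{k+1} = θ_k − α_k • (∇f(θ_k) + r_k + b_k); θ_k and b_k are ℱ_k-measurable; r_k is ℱ_{k+1}-measurable, integrable with square-integrable norm; E[r_k | ℱ_k] = 0 a.s.; E[‖r_k‖² | ℱ_k] ≤ σ²·B₃²/c² a.s.; ‖b_k‖ ≤ b̃ a.s.; and each θ_k has square-integrable norm with f(θ_k) integrable. Then for every K ≥ 1, writing S_K := Σ_{k=0}^{K−1} α_k and Q_K := Σ_{k=0}^{K−1} α_k², the stepsize-weighted average satisfies (1/S_K)·Σ_{k=0}^{K−1} α_k·E[‖∇f(θ_k)‖²] ≤ 4·(f(θ_0) − f*)/S_K + 2·L·(σ²·B₃²/c²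 + 2·b̃²)·Q_K/S_K + 2·b̃². -/

import Mathlib

open MeasureTheory
open scoped RealInnerProductSpace

/-!
By the descent lemma for the `L`-smooth `f`, one step lowers `f` by `α_k ‖∇f(θ_k)‖² / 2` up to
terms quadratic in the noise and the bias, plus a term linear in the noise `r_k` whose coefficient
is `ℱ_k`-measurable; since `E[r_k | ℱ_k] = 0` that term vanishes in expectation. The bias cross
term is absorbed through `⟪g, e⟫ ≥ -‖g‖² / 4 - b̃²`, and the quadratic terms in `∇f(θ_k)` through
`L α_k ≤ 1 / 4`. Summing the expected one-step inequalities over `k < K` telescopes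
`E f(θ_k)` down to `f(θ_0) - f*`.
-/

theorem le_add_inner_gradient_add_of_lipschitz_gradient
    {F : Type*} [NormedAddCommGroup F] [InnerProductSpace ℝ F] [CompleteSpace F]
    {f : F → ℝ} {L : ℝ} (hf : Differentiable ℝ f)
    (hLip : ∀ x y, ‖gradient f x - gradient f y‖ ≤ L * ‖x - y‖) (x y : F) :
    f y ≤ f x + ⟪gradient f x, y - x⟫ + L / 2 * ‖y - x‖ ^ 2 := by
  set v := y - x
  let φ : ℝ → ℝ := fun t => f (x + t • v) - t * ⟪gradient f x, v⟫ - L / 2 * t ^ 2 * ‖v‖ ^ 2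
  have hφ : ∀ t, HasDerivAt φ
      (⟪gradient f (x + t • v), v⟫ - ⟪gradient f x, v⟫ - L * t * ‖v‖ ^ 2) t := by
    intro t
    have hline : HasDerivAt (fun t : ℝ => x + t • v) v t := by
      simpa using ((hasDerivAt_id t).smul_const v).const_add x
    have hfline := (hf (x + t • v)).hasGradientAt.hasFDerivAt.comp_hasDerivAt t hline
    rw [InnerProductSpace.toDual_apply_apply] at hfline
    refine ((hfline.sub ((hasDerivAt_id t).mul_const ⟪gradient f x, v⟫)).sub
      (((hasDerivAt_pow 2 t).const_mul (L / 2)).mul_const (‖v‖ ^ 2))).congr_deriv ?_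
    push_cast
    ring
  have hφ_anti : AntitoneOn φ (Set.Icc 0 1) := by
    refine antitoneOn_of_deriv_nonpos (convex_Icc 0 1)
      (fun t _ => (hφ t).continuousAt.continuousWithinAt)
      (fun t _ => (hφ t).differentiableAt.differentiableWithinAt) fun t ht => ?_
    rw [interior_Icc] at ht
    have hgrad : ⟪gradient f (x + t • v) - gradient f x, v⟫ ≤ L * t * ‖v‖ ^ 2 :=
      calc ⟪gradient f (x + t • v) - gradient f x, v⟫
          ≤ ‖gradient f (x + t • v) - gradient f x‖ * ‖v‖ := real_inner_le_norm _ _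
        _ ≤ L * ‖t • v‖ * ‖v‖ := by
          gcongr
          simpa using hLip (x + t • v) x
        _ = L * t * ‖v‖ ^ 2 := by rw [norm_smul, Real.norm_of_nonneg ht.1.le]; ring
    rw [(hφ t).deriv, ← inner_sub_left]
    linarith
  have hφ01 := hφ_anti (Set.left_mem_Icc.2 zero_le_one) (Set.right_mem_Icc.2 zero_le_one)
    zero_le_one
  have hφ0 : φ 0 = f x := by simp [φ]
  have hφ1 : φ 1 = f y - ⟪gradient f x, y - x⟫ - L / 2 * ‖y - x‖ ^ 2 := by
    simp only [φ, v, one_smul, add_sub_cancel, one_mul, one_pow, mul_one]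
  linarith

theorem descent_of_biased_gradient_step
    {F : Type*} [NormedAddCommGroup F] [InnerProductSpace ℝ F] [CompleteSpace F]
    {f : F → ℝ} {L : ℝ} (hf : Differentiable ℝ f)
    (hLip : ∀ x y, ‖gradient f x - gradient f y‖ ≤ L * ‖x - y‖) (hL : 0 ≤ L)
    {a β : ℝ} (ha : 0 ≤ a) (haL : L * a ≤ 1 / 4) (x r e : F) (he : ‖e‖ ≤ β) :
    f (x - a • (gradient f x + r + e)) ≤ f x - a / 2 * ‖gradient f x‖ ^ 2
      + (a + L * a ^ 2) * β ^ 2 + L * a ^ 2 / 2 * ‖r‖ ^ 2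
      + ⟪(L * a ^ 2 - a) • gradient f x + (L * a ^ 2) • e, r⟫ := by
  set g := gradient f x
  have hdescent := le_add_inner_gradient_add_of_lipschitz_gradient hf hLip x
    (x - a • (g + r + e))
  -- Everything linear in the noise `r` is kept exactly: it has zero conditional mean.
  have hexpand : ⟪g, x - a • (g + r + e) - x⟫ + L / 2 * ‖x - a • (g + r + e) - x‖ ^ 2
      = -a * ‖g‖ ^ 2 - a * ⟪g, e⟫ + L * a ^ 2 / 2 * ‖g + e‖ ^ 2 + L * a ^ 2 / 2 * ‖r‖ ^ 2
        + ⟪(L * a ^ 2 - a) • g + (L * a ^ 2) • e, r⟫ := by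
    simp only [sub_sub_cancel_left, ← real_inner_self_eq_norm_sq, inner_neg_left,
      inner_neg_right, inner_add_left, inner_add_right, real_inner_smul_left,
      real_inner_smul_right, real_inner_comm g r, real_inner_comm e r, real_inner_comm g e]
    ring
  have hcross : -⟪g, e⟫ ≤ ‖g‖ ^ 2 / 4 + β ^ 2 := by
    nlinarith [neg_le_abs ⟪g, e⟫, abs_real_inner_le_norm g e, norm_nonneg g,
      norm_nonneg e, sq_nonneg (‖g‖ / 2 - ‖e‖)]
  have hsum : ‖g + e‖ ^ 2 ≤ 2 * ‖g‖ ^ 2 + 2 * β ^ 2 := by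
    nlinarith [norm_add_le g e, norm_nonneg g, norm_nonneg e, norm_nonneg (g + e),
      sq_nonneg (‖g‖ - ‖e‖)]
  nlinarith [mul_le_mul_of_nonneg_left hcross ha,
    mul_le_mul_of_nonneg_left hsum (by positivity : 0 ≤ L * a ^ 2 / 2),
    mul_le_mul_of_nonneg_right haL (by positivity : 0 ≤ a * ‖g‖ ^ 2)]

theorem LipschitzWith.memLp_comp {Ω E F : Type*} {mΩ : MeasurableSpace Ω} {μ : Measure Ω}
    [IsFiniteMeasure μ] [NormedAddCommGroup E] [NormedAddCommGroup F] {K : NNReal} {g : F → E}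
    {p : ENNReal} (hg : LipschitzWith K g) {f : Ω → F} (hf : MemLp f p μ) :
    MemLp (fun ω => g (f ω)) p μ := by
  refine ((memLp_const ‖g 0‖).add (hf.norm.const_mul K)).of_le
    (hg.continuous.comp_aestronglyMeasurable hf.1) (ae_of_all _ fun ω => ?_)
  have h := hg.norm_sub_le (f ω) 0
  rw [sub_zero] at h
  simp only [Pi.add_apply, Real.norm_eq_abs]
  rw [abs_of_nonneg (by positivity)]
  linarith [norm_le_norm_add_norm_sub' (g (f ω)) (g 0)]

section

variable {Ω F : Type*} {m mΩ : MeasurableSpace Ω} {μ : Measure Ω}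
  [NormedAddCommGroup F] [InnerProductSpace ℝ F]

theorem MeasureTheory.MemLp.integrable_inner {f g : Ω → F} (hf : MemLp f 2 μ)
    (hg : MemLp g 2 μ) : Integrable (fun ω => ⟪f ω, g ω⟫) μ :=
  memLp_one_iff_integrable.1 ((innerSL ℝ).memLp_of_bilin 1 hf hg)

theorem integral_inner_eq_zero_of_condExp_eq_zero [CompleteSpace F] [IsFiniteMeasure μ]
    (hm : m ≤ mΩ) {w r : Ω → F} (hw : StronglyMeasurable[m] w)
    (hwr : Integrable (fun ω => ⟪w ω, r ω⟫) μ) (hr : Integrable r μ) (hcond : μ[r|m] =ᵐ[μ] 0) :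
    ∫ ω, ⟪w ω, r ω⟫ ∂μ = 0 := by
  rw [← integral_condExp hm]
  refine integral_eq_zero_of_ae ?_
  filter_upwards [condExp_bilin_of_stronglyMeasurable_left (innerSL ℝ) hw hwr hr, hcond]
    with ω hpull hzero
  exact hpull.trans (by simp [hzero])

theorem integral_le_of_ae_condExp_le [IsProbabilityMeasure μ] (hm : m ≤ mΩ) {g : Ω → ℝ} {M : ℝ}
    (h : ∀ᵐ ω ∂μ, μ[g|m] ω ≤ M) : ∫ ω, g ω ∂μ ≤ M := by
  rw [← integral_condExp hm]
  simpa using integral_mono_ae integrable_condExp (integrable_const M) h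

theorem expected_descent_of_biased_gradient_step [CompleteSpace F] [IsProbabilityMeasure μ]
    {f : F → ℝ} {L : ℝ} (hf : Differentiable ℝ f)
    (hLip : ∀ x y, ‖gradient f x - gradient f y‖ ≤ L * ‖x - y‖) (hL : 0 ≤ L)
    {a β M : ℝ} (ha : 0 ≤ a) (haL : L * a ≤ 1 / 4) (hm : m ≤ mΩ) {x r e : Ω → F}
    (hx : StronglyMeasurable[m] x) (hx2 : MemLp x 2 μ)
    (he : StronglyMeasurable[m] e) (heβ : ∀ᵐ ω ∂μ, ‖e ω‖ ≤ β)
    (hr : MemLp r 2 μ) (hr_cond : μ[r|m] =ᵐ[μ] 0) (hr_sq : ∫ ω, ‖r ω‖ ^ 2 ∂μ ≤ M)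
    (hfx : Integrable (fun ω => f (x ω)) μ)
    (hfx' : Integrable (fun ω => f (x ω - a • (gradient f (x ω) + r ω + e ω))) μ) :
    a / 2 * ∫ ω, ‖gradient f (x ω)‖ ^ 2 ∂μ
      ≤ ∫ ω, f (x ω) ∂μ - ∫ ω, f (x ω - a • (gradient f (x ω) + r ω + e ω)) ∂μ
        + a * β ^ 2 + L * a ^ 2 / 2 * (M + 2 * β ^ 2) := by
  have hgrad : LipschitzWith (Real.toNNReal L) (gradient f) :=
    LipschitzWith.of_dist_le' fun y z => by simpa only [dist_eq_norm] using hLip y z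
  set G := fun ω => gradient f (x ω)
  have hG : MemLp G 2 μ := hgrad.memLp_comp hx2
  have hG_meas : StronglyMeasurable[m] G := hgrad.continuous.comp_stronglyMeasurable hx
  have he2 : MemLp e 2 μ := MemLp.of_bound (he.mono hm).aestronglyMeasurable β heβ
  set w := fun ω => (L * a ^ 2 - a) • G ω + (L * a ^ 2) • e ω
  have hw : MemLp w 2 μ := (hG.const_smul _).add (he2.const_smul _)
  have hnoise : ∫ ω, ⟪w ω, r ω⟫ ∂μ = 0 :=
    integral_inner_eq_zero_of_condExp_eq_zero hm ((hG_meas.const_smul _).add (he.const_smul _))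
      (hw.integrable_inner hr) (hr.integrable one_le_two) hr_cond
  have hpointwise : ∀ᵐ ω ∂μ, f (x ω - a • (G ω + r ω + e ω)) ≤ f (x ω) - a / 2 * ‖G ω‖ ^ 2
      + (a + L * a ^ 2) * β ^ 2 + L * a ^ 2 / 2 * ‖r ω‖ ^ 2 + ⟪w ω, r ω⟫ := by
    filter_upwards [heβ] with ω hω
    exact descent_of_biased_gradient_step hf hLip hL ha haL (x ω) (r ω) (e ω) hω
  have hG2 : Integrable (fun ω => ‖G ω‖ ^ 2) μ := hG.integrable_norm_pow two_ne_zero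
  have hr2 : Integrable (fun ω => ‖r ω‖ ^ 2) μ := hr.integrable_norm_pow two_ne_zero
  have hwr : Integrable (fun ω => ⟪w ω, r ω⟫) μ := hw.integrable_inner hr
  have hI₁ := hfx.sub' (hG2.const_mul (a / 2))
  have hI₂ := hI₁.fun_add (integrable_const ((a + L * a ^ 2) * β ^ 2))
  have hI₃ := hI₂.fun_add (hr2.const_mul (L * a ^ 2 / 2))
  have hrhs : ∫ ω, (f (x ω) - a / 2 * ‖G ω‖ ^ 2 + (a + L * a ^ 2) * β ^ 2
        + L * a ^ 2 / 2 * ‖r ω‖ ^ 2 + ⟪w ω, r ω⟫) ∂μ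
      = ∫ ω, f (x ω) ∂μ - a / 2 * ∫ ω, ‖G ω‖ ^ 2 ∂μ + (a + L * a ^ 2) * β ^ 2
        + L * a ^ 2 / 2 * ∫ ω, ‖r ω‖ ^ 2 ∂μ := by
    rw [integral_add hI₃ hwr, integral_add hI₂ (hr2.const_mul _),
      integral_add hI₁ (integrable_const _), integral_sub hfx (hG2.const_mul _), hnoise]
    simp [integral_const_mul]
  have hintegrated := integral_mono_ae hfx' (hI₃.fun_add hwr) hpointwise
  rw [hrhs] at hintegrated
  nlinarith [mul_le_mul_of_nonneg_left hr_sq (by positivity : 0 ≤ L * a ^ 2 / 2)]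

end

theorem mul_div_rpow_le_one_fourth {L α γ : ℝ} (hL : 0 < L) (hα : 0 ≤ α)
    (hαL : α ≤ 1 / (4 * L)) (hγ : 0 ≤ γ) (k : ℕ) : L * (α / ((k : ℝ) + 1) ^ γ) ≤ 1 / 4 :=
  calc L * (α / ((k : ℝ) + 1) ^ γ) ≤ L * (1 / (4 * L)) := by
        refine mul_le_mul_of_nonneg_left ((div_le_self hα ?_).trans hαL) hL.le
        exact Real.one_le_rpow (le_add_of_nonneg_left k.cast_nonneg) hγ
    _ = 1 / 4 := by field_simp

open Finset in
theorem weighted_average_le_of_descent {a g F : ℕ → ℝ} {β C Fmin : ℝ} {K : ℕ}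
    (ha : ∀ k, 0 ≤ a k)
    (hstep : ∀ k, a k / 2 * g k ≤ F k - F (k + 1) + a k * β ^ 2 + C * a k ^ 2)
    (hF : Fmin ≤ F K) :
    (1 / ∑ k ∈ range K, a k) * ∑ k ∈ range K, a k * g k
      ≤ 2 * (F 0 - Fmin) / ∑ k ∈ range K, a k
        + 2 * C * (∑ k ∈ range K, a k ^ 2) / ∑ k ∈ range K, a k + 2 * β ^ 2 := by
  set S := ∑ k ∈ range K, a k
  have hsum := sum_le_sum fun k (_ : k ∈ range K) => hstep k
  simp only [sum_add_distrib, sum_range_sub', ← sum_mul, ← mul_sum] at hsum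
  have hhalf : ∑ k ∈ range K, a k / 2 * g k = (∑ k ∈ range K, a k * g k) / 2 := by
    rw [sum_div]; exact sum_congr rfl fun k _ => by ring
  have hS : 0 ≤ S := sum_nonneg fun k _ => ha k
  -- `S = 0` when `K = 0`, so only `S / S ≤ 1` is available.
  calc (1 / S) * ∑ k ∈ range K, a k * g k
      ≤ (1 / S) * (2 * (F 0 - Fmin) + 2 * C * ∑ k ∈ range K, a k ^ 2 + 2 * β ^ 2 * S) := by
        gcongr
        linarith
    _ = 2 * (F 0 - Fmin) / S + 2 * C * (∑ k ∈ range K, a k ^ 2) / S + 2 * β ^ 2 * (S / S) := by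
        ring
    _ ≤ _ := add_le_add_right (mul_le_of_le_one_right (by positivity) (div_self_le_one S)) _

theorem biased_spsa_diminishing_stepsize_general
    (p : ℕ)
    {Ω : Type*} {mΩ : MeasurableSpace Ω} {μ : Measure Ω} [IsProbabilityMeasure μ]
    (ℱ : Filtration ℕ mΩ)
    (L σ c b b₀ B₃ : ℝ) (hL : 0 < L)
    (f : EuclideanSpace ℝ (Fin p) → ℝ) (fstar : ℝ)
    (hf : Differentiable ℝ f)
    (hLip : ∀ x y, ‖gradient f x - gradient f y‖ ≤ L * ‖x - y‖)
    (hflb : ∀ x, fstar ≤ f x)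
    (γ : ℝ) (hγ : γ ∈ Set.Ioc (1 / 2 : ℝ) 1)
    (α : ℝ) (hα : 0 < α) (hαL : α ≤ 1 / (4 * L))
    (αk : ℕ → ℝ) (hαk : ∀ k, αk k = α / ((k : ℝ) + 1) ^ γ)
    (θ r bk : ℕ → Ω → EuclideanSpace ℝ (Fin p))
    (θ0 : EuclideanSpace ℝ (Fin p)) (hθ0 : ∀ ω, θ 0 ω = θ0)
    (hrec : ∀ k ω, θ (k + 1) ω = θ k ω
      - αk k • (gradient f (θ k ω) + r k ω + bk k ω))
    (hθmeas : ∀ k, StronglyMeasurable[ℱ k] (θ k))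
    (hbmeas : ∀ k, StronglyMeasurable[ℱ k] (bk k))
    (hrint : ∀ k, Integrable (r k) μ)
    (hrsq : ∀ k, Integrable (fun ω => ‖r k ω‖ ^ 2) μ)
    (hrcond : ∀ k, μ[r k|ℱ k] =ᵐ[μ] 0)
    (hrvar : ∀ k, ∀ᵐ ω ∂μ,
      (μ[fun ω' => ‖r k ω'‖ ^ 2|ℱ k]) ω ≤ σ ^ 2 * B₃ ^ 2 / c ^ 2)
    (hbbd : ∀ k, ∀ᵐ ω ∂μ, ‖bk k ω‖ ≤ b₀ * c ^ 2 + b * B₃ / c)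
    (hθsq : ∀ k, Integrable (fun ω => ‖θ k ω‖ ^ 2) μ)
    (hfint : ∀ k, Integrable (fun ω => f (θ k ω)) μ)
    (K : ℕ) :
    (1 / ∑ k ∈ Finset.range K, αk k) *
        ∑ k ∈ Finset.range K, αk k * ∫ ω, ‖gradient f (θ k ω)‖ ^ 2 ∂μ
      ≤ 4 * (f θ0 - fstar) / (∑ k ∈ Finset.range K, αk k)
        + 2 * L * (σ ^ 2 * B₃ ^ 2 / c ^ 2 + 2 * (b₀ * c ^ 2 + b * B₃ / c) ^ 2)
          * (∑ k ∈ Finset.range K, (αk k) ^ 2) / (∑ k ∈ Finset.range K, αk k)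
        + 2 * (b₀ * c ^ 2 + b * B₃ / c) ^ 2 := by
  set β := b₀ * c ^ 2 + b * B₃ / c
  set M := σ ^ 2 * B₃ ^ 2 / c ^ 2
  have hαk_nonneg : ∀ k, 0 ≤ αk k := fun k => by rw [hαk]; positivity
  have hLαk : ∀ k, L * αk k ≤ 1 / 4 := fun k => by
    rw [hαk]
    exact mul_div_rpow_le_one_fourth hL hα.le hαL (by linarith [hγ.1]) k
  have hdescent : ∀ k, αk k / 2 * ∫ ω, ‖gradient f (θ k ω)‖ ^ 2 ∂μ
      ≤ ∫ ω, f (θ k ω) ∂μ - ∫ ω, f (θ (k + 1) ω) ∂μ + αk k * β ^ 2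
        + L / 2 * (M + 2 * β ^ 2) * αk k ^ 2 := fun k => by
    have hθ_L2 := (memLp_two_iff_integrable_sq_norm
      ((hθmeas k).mono (ℱ.le k)).aestronglyMeasurable).2 (hθsq k)
    have hr_L2 := (memLp_two_iff_integrable_sq_norm (hrint k).1).2 (hrsq k)
    have h := expected_descent_of_biased_gradient_step hf hLip hL.le (hαk_nonneg k) (hLαk k)
      (ℱ.le k) (hθmeas k) hθ_L2 (hbmeas k) (hbbd k) hr_L2 (hrcond k)
      (integral_le_of_ae_condExp_le (ℱ.le k) (hrvar k)) (hfint k)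
      (by simpa only [hrec] using hfint (k + 1))
    simp only [hrec]
    linarith
  have hfK_ge : fstar ≤ ∫ ω, f (θ K ω) ∂μ := by
    simpa using integral_mono (integrable_const fstar) (hfint K) fun ω => hflb _
  have havg := weighted_average_le_of_descent hαk_nonneg hdescent hfK_ge
  simp only [hθ0, integral_const, probReal_univ, one_smul] at havg
  refine havg.trans ?_
  have hS : 0 ≤ ∑ k ∈ Finset.range K, αk k := Finset.sum_nonneg fun k _ => hαk_nonneg k
  gcongr ?_ / _ + ?_ / _ + _
  · linarith [hflb θ0]
  · have : 0 ≤ L * (M + 2 * β ^ 2) * ∑ k ∈ Finset.range K, αk k ^ 2 := by positivity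
    linarith

/-- diminishing-stepsize convergence guarantee for SPSA with biased
function evaluations. With `α_k = α/(k+1)^γ`, `γ ∈ (1/2,1]`, `0 < α ≤ 1/(4L)`,
conditional second moment of `r_k` at most `σ²B₃²/c²`, and bias bounded a.s. by
`b̃ = b₀c² + bB₃/c`, the stepsize-weighted average of `E‖∇f(θ_k)‖²` satisfies
`(1/S_K)·Σ α_k E‖∇f(θ_k)‖² ≤ 4(f(θ_0) − f*)/S_K + 2L(σ²B₃²/c² + 2b̃²)Q_K/S_K + 2b̃²`. -/
theorem biased_spsa_diminishing_stepsize
    (p : ℕ) (hp : 0 < p)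
    {Ω : Type*} {mΩ : MeasurableSpace Ω} {μ : Measure Ω} [IsProbabilityMeasure μ]
    (ℱ : Filtration ℕ mΩ)
    (L σ c b b₀ B₃ : ℝ) (hL : 0 < L) (hσ : 0 < σ) (hc : 0 < c) (hb : 0 < b)
    (hb₀ : 0 < b₀) (hB₃ : 0 < B₃)
    (f : EuclideanSpace ℝ (Fin p) → ℝ) (fstar : ℝ)
    (hf : Differentiable ℝ f)
    (hLip : ∀ x y, ‖gradient f x - gradient f y‖ ≤ L * ‖x - y‖)
    (hflb : ∀ x, fstar ≤ f x)
    (γ : ℝ) (hγ : γ ∈ Set.Ioc (1 / 2 : ℝ) 1)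
    (α : ℝ) (hα : 0 < α) (hαL : α ≤ 1 / (4 * L))
    (αk : ℕ → ℝ) (hαk : ∀ k, αk k = α / ((k : ℝ) + 1) ^ γ)
    (θ r bk : ℕ → Ω → EuclideanSpace ℝ (Fin p))
    (θ0 : EuclideanSpace ℝ (Fin p)) (hθ0 : ∀ ω, θ 0 ω = θ0)
    (hrec : ∀ k ω, θ (k + 1) ω = θ k ω
      - αk k • (gradient f (θ k ω) + r k ω + bk k ω))
    (hθmeas : ∀ k, StronglyMeasurable[ℱ k] (θ k))
    (hbmeas : ∀ k, StronglyMeasurable[ℱ k] (bk k))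
    (hrmeas : ∀ k, StronglyMeasurable[ℱ (k + 1)] (r k))
    (hrint : ∀ k, Integrable (r k) μ)
    (hrsq : ∀ k, Integrable (fun ω => ‖r k ω‖ ^ 2) μ)
    (hrcond : ∀ k, μ[r k|ℱ k] =ᵐ[μ] 0)
    (hrvar : ∀ k, ∀ᵐ ω ∂μ,
      (μ[fun ω' => ‖r k ω'‖ ^ 2|ℱ k]) ω ≤ σ ^ 2 * B₃ ^ 2 / c ^ 2)
    (hbbd : ∀ k, ∀ᵐ ω ∂μ, ‖bk k ω‖ ≤ b₀ * c ^ 2 + b * B₃ / c)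
    (hθsq : ∀ k, Integrable (fun ω => ‖θ k ω‖ ^ 2) μ)
    (hfint : ∀ k, Integrable (fun ω => f (θ k ω)) μ)
    (K : ℕ) (hK : 1 ≤ K) :
    (1 / ∑ k ∈ Finset.range K, αk k) *
        ∑ k ∈ Finset.range K, αk k * ∫ ω, ‖gradient f (θ k ω)‖ ^ 2 ∂μ
      ≤ 4 * (f θ0 - fstar) / (∑ k ∈ Finset.range K, αk k)
        + 2 * L * (σ ^ 2 * B₃ ^ 2 / c ^ 2 + 2 * (b₀ * c ^ 2 + b * B₃ / c) ^ 2)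
          * (∑ k ∈ Finset.range K, (αk k) ^ 2) / (∑ k ∈ Finset.range K, αk k)
        + 2 * (b₀ * c ^ 2 + b * B₃ / c) ^ 2 :=
  biased_spsa_diminishing_stepsize_general p ℱ L σ c b b₀ B₃ hL f fstar hf hLip hflb γ hγ α hα hαL
    αk hαk θ r bk θ0 hθ0 hrec hθmeas hbmeas hrint hrsq hrcond hrvar hbbd hθsq hfint K
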